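/- Let k ≥ 2, assume the node condition on the spectral data, and assume a_{ij} ≠ 0 for all i ≠ j. Fix i ≠ j in {1,…,k}. Let P_1,…,P_k and R_1,…,R_k be polynomials of degree at most k−1 such that: P_n(0) = 0 for all n > i; the coefficient of ζ^{k−1} in P_n is 0 for all n < i; R_n(0) = 0 for all n > j; and the coefficient of ζ^{k−1} in R_n is 0 for all n < j. Write R_n(ζ) = Σ_{m=0}^{k−1} b_{n,m} ζ^m, define σR_n(ζ) = Σ_{m=0}^{k−1} (−1)^{k−1−m}·conj(b_{n,m})·ζ^{k−1−m} and Z_n = P_n·σR_n, and assume the matching condition Z_n(a_{nm}) = Z_m(a_{nm}) for all n ≠ m, so that Σ_{n=1}^{k} Z_n(ζ)/∏_{m≠n}(η_n(ζ) − η_m(ζ)) equals a constant c wherever defined. Then c = 0. (In other words, the sections vanishing on the divisors ∞_1+⋯+∞_{i−1}+0_{i+1}+⋯+0_k, for distinct i, are mutually orthogonal with respect to Hitchin's hermitian form.) -/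

import Mathlib

namespace ReducibleSpectral

noncomputable section

/-- The component of the spectral curve attached to `(x, z) ∈ ℝ × ℂ`:
the graph of `η(ζ) = z + 2xζ − conj(z)·ζ²`. -/
def eta (x : ℝ) (z : ℂ) (ζ : ℂ) : ℂ :=
  z + 2 * (x : ℂ) * ζ - (starRingEnd ℂ) z * ζ ^ 2

/-- `r_{ij} = sqrt((x_i−x_j)² + |z_i−z_j|²)`. -/
def rr (x x' : ℝ) (z z' : ℂ) : ℝ :=
  Real.sqrt ((x - x') ^ 2 + ‖z - z'‖ ^ 2)

/-- `a_{ij} = ((x_i−x_j) + r_{ij}) / (conj(z_i) − conj(z_j))`, the image in `ℙ¹` of one of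
the two intersection points of the components attached to `(x_i,z_i)` and `(x_j,z_j)`. -/
def aa (x x' : ℝ) (z z' : ℂ) : ℂ :=
  (((x - x' : ℝ) : ℂ) + ((rr x x' z z' : ℝ) : ℂ)) / ((starRingEnd ℂ) z - (starRingEnd ℂ) z')

/-- The node condition: the points `a_{ij} ∈ ℂ`, `(i,j) ∈ P`, are pairwise distinct. -/
def Nodes (k : ℕ) (x : Fin k → ℝ) (z : Fin k → ℂ) : Prop :=
  ∀ i j m n : Fin k, i ≠ j → m ≠ n →
    aa (x i) (x j) (z i) (z j) = aa (x m) (x n) (z m) (z n) → i = m ∧ j = n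

/-- For `R(ζ) = Σ_{m=0}^{k−1} b_m ζ^m`, the polynomial
`σR(ζ) = Σ_{m=0}^{k−1} (−1)^{k−1−m}·conj(b_m)·ζ^{k−1−m}`, representing the antiholomorphic
conjugate section: `(−1)^{k−1} ζ^{k−1} conj(R(−1/conj(ζ))) = σR(ζ)`. -/
def sigmaR (k : ℕ) (R : Polynomial ℂ) : Polynomial ℂ :=
  ∑ m ∈ Finset.range k,
    Polynomial.C ((-1 : ℂ) ^ (k - 1 - m) * (starRingEnd ℂ) (R.coeff m)) *
      Polynomial.X ^ (k - 1 - m)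

open Polynomial

lemma sigmaR_natDegree (k : ℕ) (R : Polynomial ℂ) : (sigmaR k R).natDegree ≤ k - 1 :=
  Polynomial.natDegree_sum_le_of_forall_le _ _ fun m _ =>
    le_trans (Polynomial.natDegree_C_mul_X_pow_le _ _) (by omega)

lemma sigmaR_coeff_zero (k : ℕ) (hk : 1 ≤ k) (R : Polynomial ℂ) :
    (sigmaR k R).coeff 0 = (starRingEnd ℂ) (R.coeff (k - 1)) := by
  unfold sigmaR
  rw [Polynomial.finset_sum_coeff]
  simp only [Polynomial.coeff_C_mul, Polynomial.coeff_X_pow]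
  rw [Finset.sum_eq_single (k - 1)]
  · simp
  · intro m hm hmne
    rw [Finset.mem_range] at hm
    rw [if_neg (by omega), mul_zero]
  · intro h
    exact absurd (Finset.mem_range.mpr (by omega)) h

lemma sigmaR_coeff_top (k : ℕ) (hk : 2 ≤ k) (R : Polynomial ℂ) :
    (sigmaR k R).coeff (k - 1) = (-1 : ℂ) ^ (k - 1) * (starRingEnd ℂ) (R.coeff 0) := by
  unfold sigmaR
  rw [Polynomial.finset_sum_coeff]
  simp only [Polynomial.coeff_C_mul, Polynomial.coeff_X_pow]
  rw [Finset.sum_eq_single 0]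
  · simp
  · intro m hm hmne
    rw [Finset.mem_range] at hm
    rw [if_neg (by omega), mul_zero]
  · intro h
    exact absurd (Finset.mem_range.mpr (by omega)) h

/-- Polynomial version of `eta`. -/
def etaP (x : ℝ) (z : ℂ) : Polynomial ℂ :=
  Polynomial.C z + Polynomial.C (2 * (x : ℂ)) * Polynomial.X -
    Polynomial.C ((starRingEnd ℂ) z) * Polynomial.X ^ 2

lemma etaP_eval (x : ℝ) (z : ℂ) (ζ : ℂ) : (etaP x z).eval ζ = eta x z ζ := by
  simp [etaP, eta]

lemma etaP_natDegree (x : ℝ) (z : ℂ) : (etaP x z).natDegree ≤ 2 := by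
  refine le_trans (natDegree_sub_le _ _) (max_le ?_ (natDegree_C_mul_X_pow_le _ _))
  refine le_trans (natDegree_add_le _ _) (max_le (by simp) ?_)
  calc (Polynomial.C (2 * (x : ℂ)) * Polynomial.X).natDegree
      ≤ Polynomial.X.natDegree := natDegree_C_mul_le _ _
    _ ≤ 2 := by simp [natDegree_X]

lemma etaP_coeff_two (x : ℝ) (z : ℂ) : (etaP x z).coeff 2 = -((starRingEnd ℂ) z) := by
  simp [etaP, coeff_X]

lemma etaP_coeff_zero (x : ℝ) (z : ℂ) : (etaP x z).coeff 0 = z := by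
  simp [etaP, coeff_X]

/-- Key vanishing lemma: if all `Z n` have degree ≤ 2k−2 and vanishing top coefficient,
the constant value of the sum is 0. -/
lemma aux_vanish (k : ℕ) (hk : 2 ≤ k) (x : Fin k → ℝ) (z : Fin k → ℂ)
    (hz : Function.Injective z) (Z : Fin k → Polynomial ℂ)
    (hdZ : ∀ n, (Z n).natDegree ≤ (k - 1) + (k - 1))
    (hZtop : ∀ n, (Z n).coeff ((k - 1) + (k - 1)) = 0)
    (c : ℂ)
    (hc : ∀ ζ : ℂ, (∀ s l : Fin k, s ≠ l → eta (x s) (z s) ζ ≠ eta (x l) (z l) ζ) →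
      ∑ n : Fin k, (Z n).eval ζ /
        ∏ m ∈ Finset.univ.erase n, (eta (x n) (z n) ζ - eta (x m) (z m) ζ) = c) :
    c = 0 := by
  set t := k - 1 with ht
  set q : Fin k → Fin k → Polynomial ℂ := fun n m => etaP (x n) (z n) - etaP (x m) (z m) with hqdef
  have hqdeg : ∀ s l, (q s l).natDegree ≤ 2 := fun s l =>
    le_trans (natDegree_sub_le _ _) (max_le (etaP_natDegree _ _) (etaP_natDegree _ _))
  have hqc2 : ∀ s l, (q s l).coeff 2 = (starRingEnd ℂ) (z l) - (starRingEnd ℂ) (z s) := by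
    intro s l
    simp only [hqdef]; simp only [coeff_sub, etaP_coeff_two]; ring
  have hqne : ∀ s l : Fin k, s ≠ l → q s l ≠ 0 := by
    intro s l hsl h
    apply hsl
    apply hz
    have h0 : (q s l).coeff 0 = z s - z l := by
      simp only [hqdef]; simp only [coeff_sub, etaP_coeff_zero]
    rw [h, coeff_zero] at h0
    exact sub_eq_zero.mp h0.symm
  set Dp : Fin k → Polynomial ℂ := fun n => ∏ m ∈ Finset.univ.erase n, q n m with hDdef
  set Wp : Fin k → Polynomial ℂ := fun n => ∏ m ∈ Finset.univ.erase n, Dp m with hWdef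
  set G : Polynomial ℂ := (∑ n, Z n * Wp n) - Polynomial.C c * ∏ n, Dp n with hGdef
  have hcard : ∀ n : Fin k, (Finset.univ.erase n).card = t := by
    intro n
    rw [Finset.card_erase_of_mem (Finset.mem_univ n), Finset.card_univ, Fintype.card_fin]
  -- Step 1: G vanishes wherever the etas are distinct
  have hGroot : ∀ ζ : ℂ, (∀ s l : Fin k, s ≠ l → eta (x s) (z s) ζ ≠ eta (x l) (z l) ζ) →
      G.eval ζ = 0 := by
    intro ζ hζ
    have hqeval : ∀ s l, (q s l).eval ζ = eta (x s) (z s) ζ - eta (x l) (z l) ζ := by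
      intro s l; simp only [hqdef]; simp [etaP_eval]
    have hDeval : ∀ n, (Dp n).eval ζ =
        ∏ m ∈ Finset.univ.erase n, (eta (x n) (z n) ζ - eta (x m) (z m) ζ) := by
      intro n
      simp only [hDdef]
      rw [Polynomial.eval_prod]
      exact Finset.prod_congr rfl fun m _ => hqeval n m
    have hDne : ∀ n, (Dp n).eval ζ ≠ 0 := by
      intro n
      rw [hDeval]
      exact Finset.prod_ne_zero_iff.mpr fun m hm =>
        sub_ne_zero_of_ne (hζ n m (Finset.ne_of_mem_erase hm).symm)
    have hG : G.eval ζ = (∑ n, (Z n).eval ζ * (Wp n).eval ζ) - c * ∏ n, (Dp n).eval ζ := by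
      rw [hGdef]
      simp [Polynomial.eval_finset_sum, Polynomial.eval_prod]
    rw [hG]
    have hWeval : ∀ n, (Wp n).eval ζ = ∏ m ∈ Finset.univ.erase n, (Dp m).eval ζ := by
      intro n; simp only [hWdef]; rw [Polynomial.eval_prod]
    have key : ∀ n : Fin k, (Z n).eval ζ * (Wp n).eval ζ =
        ((Z n).eval ζ / (Dp n).eval ζ) * ∏ m, (Dp m).eval ζ := by
      intro n
      rw [hWeval, ← Finset.prod_erase_mul Finset.univ (fun m => (Dp m).eval ζ)
        (Finset.mem_univ n)]
      field_simp
      rw [mul_div_cancel_right₀ _ (hDne n)]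
    rw [Finset.sum_congr rfl fun n _ => key n, ← Finset.sum_mul]
    have hs : (∑ n : Fin k, (Z n).eval ζ / (Dp n).eval ζ) = c := by
      rw [← hc ζ hζ]
      exact Finset.sum_congr rfl fun n _ => by rw [hDeval]
    rw [hs, sub_self]
  -- Step 2: G = 0
  have hGzero : G = 0 := by
    apply Polynomial.eq_zero_of_infinite_isRoot
    have hBadfin : (⋃ p : Fin k × Fin k,
        {ζ : ℂ | p.1 ≠ p.2 ∧ (q p.1 p.2).eval ζ = 0}).Finite := by
      apply Set.finite_iUnion
      intro p
      by_cases hp : p.1 = p.2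
      · exact Set.Finite.subset Set.finite_empty fun ζ hζ => absurd hp hζ.1
      · exact Set.Finite.subset (Polynomial.finite_setOf_isRoot (hqne p.1 p.2 hp))
          fun ζ hζ => hζ.2
    refine Set.Infinite.mono ?_ hBadfin.infinite_compl
    intro ζ hζ
    show G.eval ζ = 0
    apply hGroot
    intro s l hsl heq
    exact hζ (Set.mem_iUnion.mpr ⟨(s, l), hsl, by simp only [hqdef]; simp [etaP_eval, heq]⟩)
  -- Step 3: extract the top coefficient
  have hGeq : (∑ n, Z n * Wp n) = Polynomial.C c * ∏ n, Dp n := sub_eq_zero.mp hGzero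
  have hdD : ∀ n, (Dp n).natDegree ≤ t * 2 := by
    intro n
    simp only [hDdef]
    refine le_trans (Polynomial.natDegree_prod_le _ _) ?_
    refine le_trans (Finset.sum_le_card_nsmul _ _ 2 fun m _ => hqdeg n m) ?_
    rw [hcard n, smul_eq_mul]
  have hdW : ∀ n, (Wp n).natDegree ≤ t * (t * 2) := by
    intro n
    simp only [hWdef]
    refine le_trans (Polynomial.natDegree_prod_le _ _) ?_
    refine le_trans (Finset.sum_le_card_nsmul _ _ (t * 2) fun m _ => hdD m) ?_
    rw [hcard n, smul_eq_mul]
  have hDc : ∀ n, (Dp n).coeff (t * 2) =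
      ∏ m ∈ Finset.univ.erase n, ((starRingEnd ℂ) (z m) - (starRingEnd ℂ) (z n)) := by
    intro n
    simp only [hDdef]
    have := Polynomial.coeff_prod_of_natDegree_le (s := Finset.univ.erase n)
      (fun m => q n m) 2 (fun m _ => hqdeg n m)
    rw [hcard n] at this
    rw [this]
    exact Finset.prod_congr rfl fun m _ => hqc2 n m
  have hcoeff := congrArg (fun p : Polynomial ℂ => p.coeff ((t + t) + t * (t * 2))) hGeq
  simp only [Polynomial.finset_sum_coeff] at hcoeff
  have hLHS : ∀ n : Fin k, (Z n * Wp n).coeff ((t + t) + t * (t * 2)) = 0 := by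
    intro n
    rw [Polynomial.coeff_mul_add_eq_of_natDegree_le (hdZ n) (hdW n), hZtop n, zero_mul]
  rw [Finset.sum_eq_zero fun n _ => hLHS n] at hcoeff
  -- RHS
  have hMeq : (Finset.univ : Finset (Fin k)).card * (t * 2) = (t + t) + t * (t * 2) := by
    rw [Finset.card_univ, Fintype.card_fin]
    have hkt : k = t + 1 := by omega
    rw [hkt]; ring
  have hprodc : (∏ n, Dp n).coeff ((t + t) + t * (t * 2)) =
      ∏ n, (Dp n).coeff (t * 2) := by
    rw [← hMeq]
    exact Polynomial.coeff_prod_of_natDegree_le (s := Finset.univ) Dp (t * 2)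
      fun n _ => hdD n
  rw [Polynomial.coeff_C_mul, hprodc] at hcoeff
  have hLne : (∏ n, (Dp n).coeff (t * 2)) ≠ 0 := by
    apply Finset.prod_ne_zero_iff.mpr
    intro n _
    rw [hDc n]
    apply Finset.prod_ne_zero_iff.mpr
    intro m hm
    exact sub_ne_zero_of_ne fun h =>
      (Finset.ne_of_mem_erase hm) (hz ((starRingEnd ℂ).injective h))
  rcases mul_eq_zero.mp hcoeff.symm with h | h
  · exact h
  · exact absurd h hLne

/-- orthogonality of the distinguished sections. If `(P_n)` represents a
section vanishing on `∞_1+⋯+∞_{i−1}+0_{i+1}+⋯+0_k` and `(R_n)` one vanishing on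
`∞_1+⋯+∞_{j−1}+0_{j+1}+⋯+0_k` with `i ≠ j`, then the constant value `c` of
`Σ_n (P_n·σR_n)(ζ)/∏_{m≠n}(η_n(ζ)−η_m(ζ))`, i.e. Hitchin's hermitian pairing, is zero. -/
theorem distinguished_sections_orthogonal (k : ℕ) (hk : 2 ≤ k)
    (x : Fin k → ℝ) (z : Fin k → ℂ) (hz : Function.Injective z)
    (hnode : Nodes k x z)
    (ha : ∀ i j : Fin k, i ≠ j → aa (x i) (x j) (z i) (z j) ≠ 0)
    (i j : Fin k) (hij : i ≠ j)
    (P R : Fin k → Polynomial ℂ)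
    (hdegP : ∀ n, (P n).degree ≤ (k - 1 : ℕ))
    (hdegR : ∀ n, (R n).degree ≤ (k - 1 : ℕ))
    (hP0 : ∀ n : Fin k, i < n → (P n).eval 0 = 0)
    (hPtop : ∀ n : Fin k, n < i → (P n).coeff (k - 1) = 0)
    (hR0 : ∀ n : Fin k, j < n → (R n).eval 0 = 0)
    (hRtop : ∀ n : Fin k, n < j → (R n).coeff (k - 1) = 0)
    (hmatch : ∀ n m : Fin k, n ≠ m →
      (P n * sigmaR k (R n)).eval (aa (x n) (x m) (z n) (z m)) =
        (P m * sigmaR k (R m)).eval (aa (x n) (x m) (z n) (z m)))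
    (c : ℂ)
    (hc : ∀ ζ : ℂ, (∀ s l : Fin k, s ≠ l → eta (x s) (z s) ζ ≠ eta (x l) (z l) ζ) →
      ∑ n : Fin k, (P n * sigmaR k (R n)).eval ζ /
        ∏ m ∈ Finset.univ.erase n, (eta (x n) (z n) ζ - eta (x m) (z m) ζ) = c) :
    c = 0 := by
  have hk1 : 1 ≤ k := by omega
  rcases hij.lt_or_gt with hlt | hgt
  · -- i < j : evaluate at 0
    have h0 : ∀ s l : Fin k, s ≠ l → eta (x s) (z s) 0 ≠ eta (x l) (z l) 0 := by
      intro s l hsl h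
      exact hsl (hz (by simpa [eta] using h))
    have hsum := hc 0 h0
    rw [Finset.sum_eq_zero] at hsum
    · exact hsum.symm
    · intro n _
      rw [Polynomial.eval_mul]
      rcases lt_or_ge i n with hn | hn
      · rw [hP0 n hn, zero_mul, zero_div]
      · have hnj : n < j := lt_of_le_of_lt hn hlt
        have hs0 : (sigmaR k (R n)).eval 0 = 0 := by
          rw [← Polynomial.coeff_zero_eq_eval_zero, sigmaR_coeff_zero k hk1, hRtop n hnj,
            map_zero]
        rw [hs0, mul_zero, zero_div]
  · -- j < i : top coefficient vanishes, use aux_vanish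
    apply aux_vanish k hk x z hz (fun n => P n * sigmaR k (R n)) ?_ ?_ c hc
    · intro n
      exact le_trans Polynomial.natDegree_mul_le
        (add_le_add (Polynomial.natDegree_le_of_degree_le (hdegP n)) (sigmaR_natDegree k (R n)))
    · intro n
      rw [Polynomial.coeff_mul_add_eq_of_natDegree_le (Polynomial.natDegree_le_of_degree_le (hdegP n))
        (sigmaR_natDegree k (R n))]
      rcases lt_or_ge n i with hn | hn
      · rw [hPtop n hn, zero_mul]
      · have hjn : j < n := lt_of_lt_of_le hgt hn
        have h0 : (R n).coeff 0 = 0 := by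
          rw [Polynomial.coeff_zero_eq_eval_zero]; exact hR0 n hjn
        rw [sigmaR_coeff_top k hk, h0, map_zero, mul_zero, mul_zero]

end

end ReducibleSpectral
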